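/- arXiv:1807.03979 — 2 statements merged into one kernel-verified Lean document; each statement's English description precedes it below -/
import Mathlib

section
/- There exists a sequential plurality voting profile with 3 alternatives and 6 voters plus a deterministic tie-breaking order in which a Condorcet loser is elected in the subgame-perfect equilibrium. Concretely: preferences Voter 1: A≻C≻B, Voter 2: C≻B≻A, Voter 3: B≻C≻A, Voter 4: A≻B≻C, Voter 5: A≻B≻C, Voter 6: B≻A≻C; tie-break order C≻B≻A. Then C is a Condorcet loser yet C is elected. -/
/-!
That `C` is a Condorcet loser is a finite count. For the equilibrium, `speOut` and `detWinner`
select by `Classical.choice`, so they do not evaluate. Since every voter's preference and the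
tie-break order are strict, the selected element is the unique minimiser of a rank function,
which a list `argmin` computes; the resulting backward induction over the `4 ^ 6` ballot
sequences is then evaluated by the kernel.
-/

open Classical
open Fin.NatCast

/-- `maxWrt worse s` picks the element of `s` that every other element of `s` is `worse` than. -/
noncomputable def maxWrt {O : Type} [Nonempty O] (worse : O → O → Prop) (s : Finset O) : O :=
  if h : ∃ o ∈ s, ∀ o' ∈ s, o' ≠ o → worse o' o then h.choose else Classical.arbitrary O

/-- Backward-induction (subgame perfect) outcome of a sequential game with `n` remaining movers,
`worse k` the strict "is worse than" relation of the `k`-th mover on outcomes. -/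
noncomputable def speOut {B O : Type} [Fintype B] [Nonempty O]
    (worse : ℕ → O → O → Prop) (outcome : List B → O) : ℕ → List B → O
  | 0, h => outcome h
  | n+1, h => maxWrt (worse h.length)
      (Finset.univ.image (fun b => speOut worse outcome n (h ++ [b])))

/-- number of ballots approving `x`. -/
def votes {m : ℕ} (h : List (Finset (Fin m))) (x : Fin m) : ℕ :=
  h.countP (fun b => decide (x ∈ b))

/-- set of alternatives with the maximal number of votes. -/
def winSet {m : ℕ} (h : List (Finset (Fin m))) : Finset (Fin m) :=
  Finset.univ.filter (fun x => ∀ y, votes h y ≤ votes h x)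

/-- deterministic tie-breaking: the member of the winning set with least tie-break rank. -/
noncomputable def detWinner {m : ℕ} [Nonempty (Fin m)] (tb : Fin m → ℕ)
    (h : List (Finset (Fin m))) : Fin m :=
  maxWrt (fun y x => tb x < tb y) (winSet h)

def topRank {m : ℕ} (r : Fin m → ℕ) (S : Finset (Fin m)) : WithTop ℕ := (S.image r).min

/-- remove the most preferred element. -/
def shed {m : ℕ} (r : Fin m → ℕ) (S : Finset (Fin m)) : Finset (Fin m) :=
  S.filter (fun a => (r a : WithTop ℕ) ≠ topRank r S)

/-- the lifted strict preference on subsets: better top, or equal top and smaller,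
or equal top and equal size and recursively better after removing the tops. -/
def liftBetter {m : ℕ} (r : Fin m → ℕ) : ℕ → Finset (Fin m) → Finset (Fin m) → Prop
  | 0, _, _ => False
  | fuel+1, S, S' =>
    topRank r S < topRank r S' ∨
    (topRank r S = topRank r S' ∧ S.card < S'.card) ∨
    (topRank r S = topRank r S' ∧ S.card = S'.card ∧
      liftBetter r fuel (shed r S) (shed r S'))

/-- `x` beats `y` in pairwise majority comparison. -/
def beats {n m : ℕ} (prof : Fin n → Fin m → ℕ) (x y : Fin m) : Prop :=
  (Finset.univ.filter (fun i => prof i x < prof i y)).card >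
  (Finset.univ.filter (fun i => prof i y < prof i x)).card


open Function

lemma maxWrt_eq_of_forall_lt {O : Type} [Nonempty O] {r : O → ℕ} {s : Finset O} {a : O}
    (ha : a ∈ s) (hlt : ∀ o ∈ s, o ≠ a → r a < r o) :
    maxWrt (fun y x => r x < r y) s = a := by
  have hex : ∃ o ∈ s, ∀ o' ∈ s, o' ≠ o → r o < r o' := ⟨a, ha, hlt⟩
  rw [maxWrt, dif_pos hex]
  obtain ⟨hmem, hmin⟩ := hex.choose_spec
  by_contra hne
  exact lt_asymm (hmin a ha (Ne.symm hne)) (hlt _ hmem hne)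

namespace Fin

variable {m : ℕ} [NeZero m]

def leastBy (r : Fin m → ℕ) (s : Finset (Fin m)) : Fin m :=
  (((List.finRange m).filter (· ∈ s)).argmin r).getD 0

lemma leastBy_mem_and_le {r : Fin m → ℕ} {s : Finset (Fin m)} (hs : s.Nonempty) :
    leastBy r s ∈ s ∧ ∀ o ∈ s, r (leastBy r s) ≤ r o := by
  set l := (List.finRange m).filter (· ∈ s)
  have mem_l {o : Fin m} : o ∈ l ↔ o ∈ s := by simp [l]
  obtain ⟨a, ha⟩ : ∃ a, l.argmin r = some a := by
    refine Option.ne_none_iff_exists'.1 fun h => ?_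
    obtain ⟨o, ho⟩ := hs
    simpa [List.argmin_eq_none.1 h] using mem_l.2 ho
  have hleast : leastBy r s = a := by simp [leastBy, l, ha]
  rw [hleast]
  exact ⟨mem_l.1 (List.argmin_mem ha), fun o ho => List.le_of_mem_argmin (mem_l.2 ho) ha⟩

lemma maxWrt_eq_leastBy {r : Fin m → ℕ} (hr : Injective r) {s : Finset (Fin m)}
    (hs : s.Nonempty) : maxWrt (fun y x => r x < r y) s = leastBy r s := by
  obtain ⟨hmem, hle⟩ := leastBy_mem_and_le (r := r) hs
  exact maxWrt_eq_of_forall_lt hmem fun o ho hne =>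
    (hle o ho).lt_of_ne fun h => hne (hr h).symm

end Fin

section BackwardInduction

variable {B : Type} [Fintype B] {m : ℕ} [NeZero m]

def backwardInduction (rank : ℕ → Fin m → ℕ) (outcome : List B → Fin m) :
    ℕ → List B → Fin m
  | 0, h => outcome h
  | n+1, h => Fin.leastBy (rank h.length)
      (Finset.univ.image fun b => backwardInduction rank outcome n (h ++ [b]))

theorem speOut_eq_backwardInduction [Nonempty B] {rank : ℕ → Fin m → ℕ}
    (hrank : ∀ i, Injective (rank i)) (outcome : List B → Fin m) (n : ℕ) (h : List B) :
    speOut (fun i x y => rank i y < rank i x) outcome n h =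
      backwardInduction rank outcome n h := by
  induction n generalizing h with
  | zero => rfl
  | succ n ih =>
    rw [speOut, backwardInduction]
    simp only [ih]
    convert Fin.maxWrt_eq_leastBy (hrank h.length) ((Finset.univ_nonempty (α := B)).image _)

end BackwardInduction

section Plurality

variable {m : ℕ} [NeZero m]

lemma winSet_nonempty (h : List (Finset (Fin m))) : (winSet h).Nonempty := by
  obtain ⟨x, -, hx⟩ := Finset.exists_max_image Finset.univ (votes h) Finset.univ_nonempty
  exact ⟨x, Finset.mem_filter.2 ⟨Finset.mem_univ x, fun y => hx y (Finset.mem_univ y)⟩⟩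

lemma detWinner_eq_leastBy {tb : Fin m → ℕ} (htb : Injective tb) (h : List (Finset (Fin m))) :
    detWinner tb h = Fin.leastBy tb (winSet h) :=
  Fin.maxWrt_eq_leastBy htb (winSet_nonempty h)

end Plurality

/-- Condorcet loser paradox in sequential plurality voting with deterministic
tie-breaking: 3 alternatives A=0, B=1, C=2, 6 voters
(A≻C≻B, C≻B≻A, B≻C≻A, A≻B≻C, A≻B≻C, B≻A≻C), tie-break order C≻B≻A.
C is a Condorcet loser but C is elected in the SPE. -/
theorem condorcet_loser_paradox_plurality_deterministic :
    let prof : Fin 6 → Fin 3 → ℕ :=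
      ![![0,2,1], ![2,1,0], ![2,0,1], ![0,1,2], ![0,1,2], ![1,0,2]]
    let tb : Fin 3 → ℕ := ![2,1,0]
    (∀ y : Fin 3, y ≠ 2 → beats prof y 2) ∧
    speOut (fun i (x y : Fin 3) => prof i y < prof i x)
      (fun h : List (Option (Fin 3)) => detWinner tb (h.map Option.toFinset)) 6 [] = 2 := by
  intro prof tb
  have hprof : ∀ i : Fin 6, Injective (prof i) := by decide
  have htb : Injective tb := by decide
  constructor
  · simp only [beats]
    decide
  · rw [speOut_eq_backwardInduction (rank := fun i => prof i) (fun i => hprof i)]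
    simp only [detWinner_eq_leastBy htb]
    decide +kernel
end

section
/- In any sequential voting system (plurality or approval, either tie-breaking rule), if strictly more than half the voters rank alternative X first, then in the subgame-perfect equilibrium X is the unique winner (and all those voters voting only for X forms part of an SPE). -/
open Classical

/-!
Call a voter a fan if they rank `X` first. Along any play, `X` is safe as long as, for every
rival `z`, `X` would still beat `z` if every remaining fan voted for `X` alone and every remaining
other voter for `z` alone. A strict majority of fans makes `X` safe at the start; a fan keeps
`X` safe by voting for `X` alone, and any ballot of a non-fan keeps it safe, since a non-fan is
discounted as a full vote for each rival. By backward induction, every subgame in which `X` is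
safe ends with `X` as the sole winner: a fan can secure that outcome, which is their favourite,
and a non-fan cannot avoid it.
-/

lemma maxWrt_singleton {O : Type} [Nonempty O] (worse : O → O → Prop) (t : O) :
    maxWrt worse {t} = t := by
  have hex : ∃ o ∈ ({t} : Finset O), ∀ o' ∈ ({t} : Finset O), o' ≠ o → worse o' o :=
    ⟨t, Finset.mem_singleton_self t, fun o' ho' hne => absurd (Finset.mem_singleton.mp ho') hne⟩
  rw [maxWrt, dif_pos hex]
  exact Finset.mem_singleton.mp hex.choose_spec.1

lemma maxWrt_eq_of_forall_worse {O : Type} [Nonempty O] {worse : O → O → Prop}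
    (hasymm : ∀ o o', worse o o' → ¬ worse o' o) {s : Finset O} {t : O}
    (ht : t ∈ s) (hworse : ∀ o ∈ s, o ≠ t → worse o t) : maxWrt worse s = t := by
  have hex : ∃ o ∈ s, ∀ o' ∈ s, o' ≠ o → worse o' o := ⟨t, ht, hworse⟩
  rw [maxWrt, dif_pos hex]
  obtain ⟨hmem, hmax⟩ := hex.choose_spec
  by_contra hne
  exact hasymm _ _ (hworse _ hmem hne) (hmax t ht fun h => hne h.symm)

section BackwardInduction

variable {B O : Type} [Fintype B] [Nonempty O] {worse : ℕ → O → O → Prop}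
  {outcome : List B → O}

lemma speOut_succ_eq_of_forall [Nonempty B] {j : ℕ} {h : List B} {t : O}
    (hall : ∀ b, speOut worse outcome j (h ++ [b]) = t) :
    speOut worse outcome (j + 1) h = t := by
  have himage : Finset.univ.image (fun b => speOut worse outcome j (h ++ [b])) = {t} := by
    simp only [hall, Finset.univ_nonempty, Finset.image_const]
  rw [speOut, himage, maxWrt_singleton]

lemma speOut_succ_eq_of_exists {j : ℕ} {h : List B} {t : O}
    (hasymm : ∀ o o', worse h.length o o' → ¬ worse h.length o' o)
    (hex : ∃ b, speOut worse outcome j (h ++ [b]) = t)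
    (hfav : ∀ o, o ≠ t → worse h.length o t) :
    speOut worse outcome (j + 1) h = t := by
  obtain ⟨b, hb⟩ := hex
  exact maxWrt_eq_of_forall_worse hasymm
    (Finset.mem_image.mpr ⟨b, Finset.mem_univ b, hb⟩) fun o _ => hfav o

theorem speOut_eq_of_invariant [Nonempty B] (P : List B → Prop) (N : ℕ) (t : O)
    (hasymm : ∀ i o o', worse i o o' → ¬ worse i o' o)
    (hfinal : ∀ h, h.length = N → P h → outcome h = t)
    (hstep : ∀ h, h.length < N → P h →
      (∀ b, P (h ++ [b])) ∨ ((∃ b, P (h ++ [b])) ∧ ∀ o, o ≠ t → worse h.length o t)) :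
    ∀ j h, h.length + j = N → P h → speOut worse outcome j h = t := by
  intro j
  induction j with
  | zero => exact fun h hlen hP => hfinal h (by omega) hP
  | succ j ih =>
    intro h hlen hP
    have hchild : ∀ b, P (h ++ [b]) → speOut worse outcome j (h ++ [b]) = t :=
      fun b => ih _ (by simp; omega)
    rcases hstep h (by omega) hP with hall | ⟨⟨b, hb⟩, hfav⟩
    · exact speOut_succ_eq_of_forall fun b => hchild b (hall b)
    · exact speOut_succ_eq_of_exists (hasymm _) ⟨b, hchild b hb⟩ hfav

end BackwardInduction

section Voting

variable {m : ℕ}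

lemma votes_append_singleton (h : List (Finset (Fin m))) (b : Finset (Fin m)) (z : Fin m) :
    votes (h ++ [b]) z = votes h z + if z ∈ b then 1 else 0 := by
  simp [votes, List.countP_append]

lemma winSet_eq_singleton {h : List (Finset (Fin m))} {X : Fin m}
    (hlead : ∀ z, z ≠ X → votes h z < votes h X) : winSet h = {X} := by
  ext x
  simp only [winSet, Finset.mem_filter, Finset.mem_univ, true_and, Finset.mem_singleton]
  constructor
  · intro hx
    by_contra hne
    exact (hlead x hne).not_ge (hx X)
  · rintro rfl y
    rcases eq_or_ne y x with rfl | hy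
    · exact le_rfl
    · exact (hlead y hy).le

abbrev RanksFirst (r : Fin m → ℕ) (X : Fin m) : Prop := ∀ z, z ≠ X → r X < r z

def fanCount (prof : ℕ → Fin m → ℕ) (X : Fin m) (k n : ℕ) : ℕ :=
  ((Finset.Ico k n).filter (fun i => RanksFirst (prof i) X)).card

lemma fanCount_of_lt (prof : ℕ → Fin m → ℕ) (X : Fin m) {k n : ℕ} (hk : k < n) :
    fanCount prof X k n = fanCount prof X (k + 1) n + if RanksFirst (prof k) X then 1 else 0 := by
  rw [fanCount, fanCount, ← Finset.insert_Ico_add_one_left_eq_Ico hk, Finset.filter_insert]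
  split_ifs
  · exact Finset.card_insert_of_notMem fun hmem => by simp at hmem
  · rfl

def Safe (prof : ℕ → Fin m → ℕ) (X : Fin m) (n : ℕ) (h : List (Finset (Fin m))) : Prop :=
  ∀ z, z ≠ X → votes h z + (n - h.length) < votes h X + 2 * fanCount prof X h.length n

variable {prof : ℕ → Fin m → ℕ} {X : Fin m} {n : ℕ}

lemma safe_nil (hmaj : n < 2 * fanCount prof X 0 n) : Safe prof X n [] :=
  fun _ _ => by simpa [votes] using hmaj

lemma winSet_eq_singleton_of_safe {h : List (Finset (Fin m))} (hlen : h.length = n)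
    (hsafe : Safe prof X n h) : winSet h = {X} := by
  refine winSet_eq_singleton fun z hz => ?_
  have := hsafe z hz
  simp only [hlen, fanCount, lt_self_iff_false, not_false_eq_true, Finset.Ico_eq_empty,
    Finset.filter_empty, Finset.card_empty] at this
  omega

lemma Safe.append_singleton {h : List (Finset (Fin m))} (hlen : h.length < n)
    (hfan : RanksFirst (prof h.length) X) (hsafe : Safe prof X n h) :
    Safe prof X n (h ++ [{X}]) := by
  intro z hz
  have hcount := fanCount_of_lt prof X hlen
  have := hsafe z hz
  rw [if_pos hfan] at hcount
  simp only [votes_append_singleton, List.length_append, List.length_singleton,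
    Finset.mem_singleton, hz, if_false, if_true]
  omega

lemma Safe.append_of_not_ranksFirst {h : List (Finset (Fin m))} (hlen : h.length < n)
    (hfan : ¬ RanksFirst (prof h.length) X) (hsafe : Safe prof X n h) (b : Finset (Fin m)) :
    Safe prof X n (h ++ [b]) := by
  intro z hz
  have hcount := fanCount_of_lt prof X hlen
  have := hsafe z hz
  rw [if_neg hfan] at hcount
  simp only [votes_append_singleton, List.length_append, List.length_singleton]
  split_ifs <;> omega

theorem speOut_eq_of_fanCount {B O : Type} [Fintype B] [Nonempty O]
    (hmaj : n < 2 * fanCount prof X 0 n)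
    (ballot : B → Finset (Fin m)) (bX : B) (hbX : ballot bX = {X})
    {worse : ℕ → O → O → Prop} (hasymm : ∀ i o o', worse i o o' → ¬ worse i o' o)
    {outcome : List B → O} {t : O}
    (hout : ∀ h, winSet (h.map ballot) = {X} → outcome h = t)
    (hfav : ∀ i o, RanksFirst (prof i) X → o ≠ t → worse i o t) :
    speOut worse outcome n [] = t := by
  have : Nonempty B := ⟨bX⟩
  refine speOut_eq_of_invariant (fun h => Safe prof X n (h.map ballot)) n t hasymm
    (fun h hlen hsafe => hout h (winSet_eq_singleton_of_safe (by simpa) hsafe))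
    (fun h hlen hsafe => ?_) n [] (by simp) (safe_nil hmaj)
  rw [← List.length_map ballot] at hlen
  by_cases hfan : RanksFirst (prof h.length) X
  · refine Or.inr ⟨⟨bX, ?_⟩, fun o => hfav _ o hfan⟩
    simpa [hbX] using hsafe.append_singleton hlen (by simpa using hfan)
  · exact Or.inl fun b => by
      simpa using hsafe.append_of_not_ranksFirst hlen (by simpa using hfan) (ballot b)

end Voting

section LiftedPreference

variable {m : ℕ} {r : Fin m → ℕ}

lemma liftBetter_asymm :
    ∀ fuel S S', liftBetter r fuel S S' → ¬ liftBetter r fuel S' S := by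
  intro fuel
  induction fuel with
  | zero => exact fun _ _ h => h.elim
  | succ fuel ih =>
    intro S S' h1 h2
    simp only [liftBetter] at h1 h2
    rcases h1 with h1 | ⟨e1, h1⟩ | ⟨e1, c1, h1⟩ <;>
      rcases h2 with h2 | ⟨e2, h2⟩ | ⟨e2, c2, h2⟩
    all_goals first | exact ih _ _ h1 h2 | order

lemma topRank_of_ranksFirst {X : Fin m} (hX : RanksFirst r X) {S : Finset (Fin m)}
    (hXS : X ∈ S) : topRank r S = r X :=
  le_antisymm (Finset.min_le (Finset.mem_image_of_mem r hXS)) <|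
    Finset.le_min fun _ hb => by
      obtain ⟨z, -, rfl⟩ := Finset.mem_image.mp hb
      rcases eq_or_ne z X with rfl | hz
      · exact le_rfl
      · exact WithTop.coe_le_coe.mpr (hX z hz).le

lemma lt_topRank_of_ranksFirst {X : Fin m} (hX : RanksFirst r X) {S : Finset (Fin m)}
    (hXS : X ∉ S) : (r X : WithTop ℕ) < topRank r S := by
  rw [topRank, Finset.min_eq_inf_withTop]
  refine (Finset.lt_inf_iff (WithTop.coe_lt_top _)).mpr fun _ hb => ?_
  obtain ⟨z, hz, rfl⟩ := Finset.mem_image.mp hb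
  exact WithTop.coe_lt_coe.mpr (hX z fun h => hXS (h ▸ hz))

lemma liftBetter_singleton {X : Fin m} (hX : RanksFirst r X) (fuel : ℕ)
    {S : Finset (Fin m)} (hS : S ≠ {X}) : liftBetter r (fuel + 1) {X} S := by
  have htop : topRank r {X} = r X := topRank_of_ranksFirst hX (Finset.mem_singleton_self X)
  simp only [liftBetter]
  by_cases hXS : X ∈ S
  · refine Or.inr (Or.inl ⟨htop.trans (topRank_of_ranksFirst hX hXS).symm, ?_⟩)
    rw [Finset.card_singleton]
    exact Finset.one_lt_card_iff_nontrivial.mpr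
      ((Finset.eq_singleton_or_nontrivial hXS).resolve_left hS)
  · exact Or.inl (htop ▸ lt_topRank_of_ranksFirst hX hXS)

end LiftedPreference

theorem absolute_majority_top_wins_general
    (m n : ℕ) (prof : ℕ → Fin (m+1) → ℕ)
    (X : Fin (m+1))
    (hmaj : 2 * ((Finset.range n).filter
        (fun i => ∀ z, z ≠ X → prof i X < prof i z)).card > n) :
    (∀ tb : Fin (m+1) → ℕ, Function.Injective tb →
      speOut (fun i (x y : Fin (m+1)) => prof i y < prof i x)
        (fun h : List (Option (Fin (m+1))) => detWinner tb (h.map Option.toFinset)) n [] = X) ∧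
    (∀ tb : Fin (m+1) → ℕ, Function.Injective tb →
      speOut (fun i (x y : Fin (m+1)) => prof i y < prof i x)
        (fun h : List (Finset (Fin (m+1))) => detWinner tb h) n [] = X) ∧
    speOut (fun i (S S' : Finset (Fin (m+1))) => liftBetter (prof i) (m+1) S' S)
      (fun h : List (Option (Fin (m+1))) => winSet (h.map Option.toFinset)) n [] = {X} ∧
    speOut (fun i (S S' : Finset (Fin (m+1))) => liftBetter (prof i) (m+1) S' S)
      (fun h : List (Finset (Fin (m+1))) => winSet h) n [] = {X} := by
  have hfans : n < 2 * fanCount prof X 0 n := by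
    rwa [fanCount, ← Finset.range_eq_Ico]
  have hdet : ∀ tb h, winSet h = {X} → detWinner tb h = X := fun tb h hwin => by
    rw [detWinner, hwin, maxWrt_singleton]
  have hasymm_rank : ∀ i (x y : Fin (m+1)), prof i y < prof i x → ¬ prof i x < prof i y :=
    fun _ _ _ => lt_asymm
  have hasymm_lift : ∀ i (S S' : Finset (Fin (m+1))),
      liftBetter (prof i) (m+1) S' S → ¬ liftBetter (prof i) (m+1) S S' :=
    fun i _ _ => liftBetter_asymm _ _ _
  refine ⟨fun tb _ => ?_, fun tb _ => ?_, ?_, ?_⟩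
  · exact speOut_eq_of_fanCount hfans Option.toFinset (some X) Option.toFinset_some
      hasymm_rank (fun h => hdet tb _) fun _ o hfan ho => hfan o ho
  · exact speOut_eq_of_fanCount hfans id {X} rfl hasymm_rank
      (fun h => by simpa using hdet tb h) fun _ o hfan ho => hfan o ho
  · exact speOut_eq_of_fanCount hfans Option.toFinset (some X) Option.toFinset_some
      hasymm_lift (fun _ => id) fun _ _ hfan hS => liftBetter_singleton hfan m hS
  · exact speOut_eq_of_fanCount hfans id {X} rfl hasymm_lift
      (fun h => by simp) fun _ _ hfan hS => liftBetter_singleton hfan m hS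

/-- If strictly more than half of the voters rank alternative `X` first, then
`X` is the unique SPE winner in all four sequential voting systems:
plurality/approval with deterministic tie-breaking (for any injective
tie-break order), and plurality/approval with uniform tie-breaking. -/
theorem absolute_majority_top_wins
    (m n : ℕ) (prof : ℕ → Fin (m+1) → ℕ)
    (hinj : ∀ i < n, Function.Injective (prof i)) (X : Fin (m+1))
    (hmaj : 2 * ((Finset.range n).filter
        (fun i => ∀ z, z ≠ X → prof i X < prof i z)).card > n) :
    (∀ tb : Fin (m+1) → ℕ, Function.Injective tb →
      speOut (fun i (x y : Fin (m+1)) => prof i y < prof i x)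
        (fun h : List (Option (Fin (m+1))) => detWinner tb (h.map Option.toFinset)) n [] = X) ∧
    (∀ tb : Fin (m+1) → ℕ, Function.Injective tb →
      speOut (fun i (x y : Fin (m+1)) => prof i y < prof i x)
        (fun h : List (Finset (Fin (m+1))) => detWinner tb h) n [] = X) ∧
    speOut (fun i (S S' : Finset (Fin (m+1))) => liftBetter (prof i) (m+1) S' S)
      (fun h : List (Option (Fin (m+1))) => winSet (h.map Option.toFinset)) n [] = {X} ∧
    speOut (fun i (S S' : Finset (Fin (m+1))) => liftBetter (prof i) (m+1) S' S)
      (fun h : List (Finset (Fin (m+1))) => winSet h) n [] = {X} :=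
  absolute_majority_top_wins_general m n prof X hmaj
end
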